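/- Let V be a ℚ-vector space, p ≥ 2, u ≥ 0, Φ : V → V linear, and ψ : V → ℚ a linear functional. Suppose α = Σ_{i=0}^{u} α⁽ⁱ⁾ with Φ(α⁽ⁱ⁾) = (1/pⁱ)α⁽ⁱ⁾. If ψ(Φᵉ(α)) = ψ(α) holds for u distinct positive integers e, then ψ(α) = ψ(α⁽⁰⁾). -/
import Mathlib

open Polynomial

/-- If `ψ (Φ^e α) = ψ α` for `u` distinct positive integers `e`, then `ψ α = ψ (a 0)`,
where `α = a 0 + ⋯ + a u` is an eigenvector decomposition for eigenvalues `1/p^i`. -/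
theorem stmt12 (V : Type*) [AddCommGroup V] [Module ℚ V] (p : ℕ) (hp : 2 ≤ p)
    (u : ℕ) (Φ : Module.End ℚ V) (ψ : V →ₗ[ℚ] ℚ) (α : V) (a : Fin (u + 1) → V)
    (hα : α = ∑ i, a i)
    (ha : ∀ i : Fin (u + 1), Φ (a i) = (1 / (p : ℚ) ^ (i : ℕ)) • a i)
    (S : Finset ℕ) (hcard : S.card = u) (hpos : ∀ e ∈ S, 1 ≤ e)
    (hψ : ∀ e ∈ S, ψ ((Φ ^ e) α) = ψ α) :
    ψ α = ψ (a 0) := by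
  classical
  have hp0 : (0:ℚ) < (p:ℚ)⁻¹ := by positivity
  have hp1 : (p:ℚ)⁻¹ < 1 := by
    rw [inv_lt_one_iff₀]; right; exact_mod_cast lt_of_lt_of_le one_lt_two hp
  -- powers of Φ on eigenvectors
  have hpow : ∀ (e : ℕ) (i : Fin (u+1)), (Φ ^ e) (a i) = (((p:ℚ)⁻¹) ^ (i:ℕ)) ^ e • a i := by
    intro e i
    induction e with
    | zero => simp
    | succ e ih =>
      rw [pow_succ, Module.End.mul_apply, ha i, map_smul, ih, smul_smul, pow_succ]
      ring_nf
  have heval : ∀ e : ℕ, ψ ((Φ ^ e) α) =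
      ∑ i : Fin (u+1), ψ (a i) * (((p:ℚ)⁻¹) ^ e) ^ (i:ℕ) := by
    intro e
    rw [hα, map_sum, map_sum]
    refine Finset.sum_congr rfl fun i _ => ?_
    rw [hpow e i, map_smul, smul_eq_mul, ← pow_mul, ← pow_mul, Nat.mul_comm]
    ring
  -- the polynomial
  set P : ℚ[X] := (∑ i : Fin (u+1), C (ψ (a i)) * X ^ (i:ℕ)) - C (ψ α) with hP
  have hPeval : ∀ x : ℚ, P.eval x = (∑ i : Fin (u+1), ψ (a i) * x ^ (i:ℕ)) - ψ α := by
    intro x; simp [hP, eval_finset_sum]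
  have hdeg : P.natDegree ≤ u := by
    refine (natDegree_sub_le_iff_left ((natDegree_C _).le.trans (Nat.zero_le u))).mpr ?_
    apply natDegree_sum_le_of_forall_le
    intro i _
    exact (natDegree_C_mul_le _ _).trans (by simp [Nat.lt_succ_iff.mp i.isLt])
  -- roots
  set T : Finset ℚ := insert 1 (S.image fun e => ((p:ℚ)⁻¹) ^ e) with hT
  have hanti : StrictAnti (fun e : ℕ => ((p:ℚ)⁻¹) ^ e) :=
    pow_right_strictAnti₀ hp0 hp1
  have hTcard : T.card = u + 1 := by
    rw [hT, Finset.card_insert_of_notMem, Finset.card_image_of_injective _ hanti.injective,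
      hcard]
    simp only [Finset.mem_image, not_exists]
    rintro e ⟨he, h1⟩
    have : ((p:ℚ)⁻¹) ^ e < ((p:ℚ)⁻¹) ^ 0 := hanti (hpos e he)
    simp [h1] at this
  have hroot : ∀ x ∈ T, P.eval x = 0 := by
    intro x hx
    rw [hT, Finset.mem_insert] at hx
    rcases hx with rfl | hx
    · rw [hPeval]
      have := heval 0
      simp only [pow_zero, Module.End.one_apply, one_pow, mul_one] at this ⊢
      linarith
    · obtain ⟨e, he, rfl⟩ := Finset.mem_image.mp hx
      rw [hPeval, ← heval e, hψ e he, sub_self]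
  have hP0 : P = 0 :=
    eq_zero_of_natDegree_lt_card_of_eval_eq_zero' P T hroot
      (lt_of_le_of_lt hdeg (by omega))
  have := hPeval 0
  rw [hP0] at this
  simp only [eval_zero] at this
  have h0 : (∑ i : Fin (u+1), ψ (a i) * (0:ℚ) ^ (i:ℕ)) = ψ (a 0) := by
    rw [Fin.sum_univ_succ]
    simp
  rw [h0] at this
  linarith
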